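/- arXiv:2605.09585 — 2 statements merged into one kernel-verified Lean document; each statement's English description precedes it below -/
import Mathlib

section
/- Let α : ℂ² → ℂ be entire and suppose (∂α/∂z₂)·exp(2α) = −∂α/∂z₁ everywhere, with α a polynomial (in two complex variables). Then ∂α/∂z₂ ≡ 0 and ∂α/∂z₁ ≡ 0, i.e., α is constant. -/
/-!
Write `a = ∂₁α`, `b = ∂₂α`, so that `b · e^{2α} = -a`. On each line `z₂ = w` this is an identity
between one-variable polynomials and the exponential of a polynomial `q` with `q' = a`.
Differentiating it along the line and eliminating `e^{2q}` gives the polynomial identity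
`b a' - b' a = 2 a² b`, i.e. `W(b, a) = 2 a² b` for the Wronskian `W`.
Since `deg W(b, a) < deg a + deg b`, this forces `a = 0` or `b = 0`, and either way `b = 0` on
the line. Hence `b ≡ 0`, then `a ≡ 0`.
-/

open Complex Polynomial

namespace Polynomial

theorem eq_zero_or_eq_zero_of_wronskian_eq_sq_mul {R : Type*} [CommRing R] [IsDomain R]
    {f g h : R[X]} (hh : h ≠ 0) (hW : wronskian g f = f ^ 2 * g * h) : f = 0 ∨ g = 0 := by
  by_contra! ⟨hf, hg⟩
  have hfg : f ^ 2 * g ≠ 0 := mul_ne_zero (pow_ne_zero 2 hf) hg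
  have hlt := natDegree_wronskian_lt_add (hW ▸ mul_ne_zero hfg hh)
  rw [hW, natDegree_mul hfg hh, natDegree_mul (pow_ne_zero 2 hf) hg, natDegree_pow] at hlt
  omega

theorem eq_zero_of_eval_mul_cexp_eq {q g : ℂ[X]} {c d : ℂ} (hc : c ≠ 0)
    (h : ∀ s, g.eval s * exp (c * q.eval s) = d * (derivative q).eval s) : g = 0 := by
  set f := derivative q
  have hderiv : ∀ s, (derivative g).eval s * exp (c * q.eval s)
      + g.eval s * (exp (c * q.eval s) * (c * f.eval s)) = d * (derivative f).eval s := by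
    intro s
    have hL : HasDerivAt (fun s => g.eval s * exp (c * q.eval s)) _ s :=
      (g.hasDerivAt s).mul ((q.hasDerivAt s).const_mul c).cexp
    rw [_root_.funext h] at hL
    exact hL.unique ((f.hasDerivAt s).const_mul d)
  by_cases hd : d = 0
  · refine Polynomial.funext fun s => ?_
    simpa [hd, exp_ne_zero] using h s
  have hW : wronskian g f = f ^ 2 * g * C c := by
    refine Polynomial.funext fun s => mul_left_cancel₀ hd ?_
    simp only [wronskian, eval_sub, eval_mul, eval_pow, eval_C]
    linear_combination
      -(g.eval s) * hderiv s + ((derivative g).eval s + c * g.eval s * f.eval s) * h s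
  rcases eq_zero_or_eq_zero_of_wronskian_eq_sq_mul (C_ne_zero.mpr hc) hW with hf | hg
  · refine Polynomial.funext fun s => ?_
    simpa [hf, exp_ne_zero, f] using h s
  · exact hg

end Polynomial

namespace MvPolynomial

section Calculus

variable {𝕜 σ : Type*} [Fintype σ] [DecidableEq σ]

theorem hasFDerivAt_eval [NontriviallyNormedField 𝕜] (p : MvPolynomial σ 𝕜) (z : σ → 𝕜) :
    HasFDerivAt (fun x => eval x p)
      (∑ i, eval z (pderiv i p) • (ContinuousLinearMap.proj i : (σ → 𝕜) →L[𝕜] 𝕜)) z := by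
  induction p using MvPolynomial.induction_on with
  | C a =>
    simp only [eval_C]
    refine (hasFDerivAt_const a z).congr_fderiv ?_
    ext; simp
  | add p q hp hq =>
    simp only [map_add]
    refine (hp.add hq).congr_fderiv ?_
    ext; simp [Finset.sum_add_distrib, add_mul]
  | mul_X p j hp =>
    simp only [map_mul, eval_X]
    refine (hp.mul (ContinuousLinearMap.proj j : (σ → 𝕜) →L[𝕜] 𝕜).hasFDerivAt).congr_fderiv ?_
    ext v
    simp [Finset.sum_add_distrib, add_mul, Pi.single_apply, Finset.mul_sum, apply_ite (eval z),
      ite_mul, mul_assoc]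

theorem fderiv_eval_apply_single [NontriviallyNormedField 𝕜] (p : MvPolynomial σ 𝕜) (z : σ → 𝕜)
    (i : σ) : fderiv 𝕜 (fun x => eval x p) z (Pi.single i 1) = eval z (pderiv i p) := by
  simp [(hasFDerivAt_eval p z).fderiv, Pi.single_apply]

theorem eval_eq_eval_of_eval_pderiv_eq_zero [RCLike 𝕜] {p : MvPolynomial σ 𝕜}
    (h : ∀ i z, eval z (pderiv i p) = 0) (z w : σ → 𝕜) : eval z p = eval w p := by
  refine is_const_of_fderiv_eq_zero (fun x => (hasFDerivAt_eval p x).differentiableAt)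
    (fun x => ?_) z w
  ext
  simp [(hasFDerivAt_eval p x).fderiv, h]

end Calculus

section LineRestriction

variable {R σ : Type*} [CommSemiring R] [DecidableEq σ]

noncomputable def restrictLine (i : σ) (z : σ → R) : MvPolynomial σ R →ₐ[R] R[X] :=
  aeval (Function.update (fun j => Polynomial.C (z j)) i Polynomial.X)

theorem eval_restrictLine (i : σ) (z : σ → R) (s : R) (p : MvPolynomial σ R) :
    (restrictLine i z p).eval s = eval (Function.update z i s) p := by
  induction p using MvPolynomial.induction_on with
  | C a => simp [restrictLine]
  | add p q hp hq => simp [hp, hq]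
  | mul_X p j hp =>
    rw [map_mul, Polynomial.eval_mul, hp, map_mul, eval_X]
    by_cases hj : j = i
    · subst hj; simp [restrictLine]
    · simp [restrictLine, hj]

theorem derivative_restrictLine (i : σ) (z : σ → R) (p : MvPolynomial σ R) :
    derivative (restrictLine i z p) = restrictLine i z (pderiv i p) := by
  induction p using MvPolynomial.induction_on with
  | C a => simp [restrictLine]
  | add p q hp hq => simp [hp, hq]
  | mul_X p j hp =>
    rw [map_mul, derivative_mul, hp, pderiv_mul, map_add, map_mul, map_mul]
    congr 2
    by_cases hj : j = i
    · subst hj; simp [restrictLine]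
    · simp [restrictLine, hj]

end LineRestriction

end MvPolynomial

open MvPolynomial

theorem stmt13 (α : (Fin 2 → ℂ) → ℂ)
    (hpoly : ∃ p : MvPolynomial (Fin 2) ℂ, ∀ z, α z = MvPolynomial.eval z p)
    (heq : ∀ z, fderiv ℂ α z (Pi.single 1 1) * Complex.exp (2 * α z) =
      -(fderiv ℂ α z (Pi.single 0 1))) :
    (∀ z, fderiv ℂ α z (Pi.single 1 1) = 0) ∧
    (∀ z, fderiv ℂ α z (Pi.single 0 1) = 0) ∧
    (∃ c : ℂ, ∀ z, α z = c) := by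
  obtain ⟨p, hp⟩ := hpoly
  obtain rfl : α = fun z => eval z p := funext hp
  simp only [fderiv_eval_apply_single] at heq ⊢
  have h1 : ∀ z, eval z (pderiv 1 p) = 0 := by
    intro z
    have hline : restrictLine 0 z (pderiv 1 p) = 0 := by
      refine Polynomial.eq_zero_of_eval_mul_cexp_eq (q := restrictLine 0 z p) (c := 2) (d := -1)
        two_ne_zero fun s => ?_
      simpa [eval_restrictLine, derivative_restrictLine] using heq (Function.update z 0 s)
    simpa [eval_restrictLine] using congrArg (Polynomial.eval (z 0)) hline
  have h0 : ∀ z, eval z (pderiv 0 p) = 0 := fun z => by simpa [h1] using heq z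
  exact ⟨h1, h0, eval 0 p,
    fun z => eval_eq_eval_of_eval_pderiv_eq_zero (Fin.forall_fin_two.mpr ⟨h0, h1⟩) z 0⟩
end

section
/- Let p : ℂ² → ℂ be a polynomial and φ, ψ : ℂ² → ℂ entire functions with φ nonconstant. If exp(n·φ)·ψ₁ = exp(p)·ψ₂ holds identically, where n ≥ 1 and ψ₁, ψ₂ are polynomials with ψ₁ not identically zero, then n·φ − p is constant (hence φ is a polynomial). -/
/-!
Put `g = n φ - p`, so that `exp g · ψ₁ = ψ₂`. On a complex line through a point where `ψ₁ ≠ 0`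
this reads `exp f · q₁ = q₂` for one-variable polynomials `q₁ ≠ 0, q₂`. Since `exp f` is
continuous, `q₁ ∣ q₂` (after cancelling `gcd q₂ q₁`, a root of `q₁` would be a common root),
so `exp f` is a polynomial; having no zeros, it is constant, hence so is `f`.
-/

open Complex Polynomial

namespace Polynomial

theorem dense_setOf_eval_ne_zero {D : ℂ[X]} (hD : D ≠ 0) : Dense {t : ℂ | D.eval t ≠ 0} :=
  (D.finite_setOfPred_isRoot hD).countable.dense_compl ℂ

theorem eq_of_mul_eval_eq {h₁ h₂ : ℂ → ℂ} (hh₁ : Continuous h₁) (hh₂ : Continuous h₂)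
    {Q : ℂ[X]} (hQ : Q ≠ 0) (heq : ∀ t, h₁ t * Q.eval t = h₂ t * Q.eval t) : h₁ = h₂ :=
  hh₁.ext_on (dense_setOf_eval_ne_zero hQ) hh₂ fun t ht => mul_right_cancel₀ ht (heq t)

theorem dvd_of_continuous_mul_eval_eq {h : ℂ → ℂ} (hh : Continuous h) {Q R : ℂ[X]} (hQ : Q ≠ 0)
    (heq : ∀ t, h t * Q.eval t = R.eval t) : Q ∣ R := by
  have hcop := isCoprime_div_gcd_div_gcd (p := R) hQ
  set D := GCDMonoid.gcd R Q
  have hD : D ≠ 0 := gcd_ne_zero_of_right hQ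
  have hQD : D * (Q / D) = Q := EuclideanDomain.mul_div_cancel' hD (gcd_dvd_right R Q)
  have hRD : D * (R / D) = R := EuclideanDomain.mul_div_cancel' hD (gcd_dvd_left R Q)
  have hreduced : h * (fun t => (Q / D).eval t) = fun t => (R / D).eval t := by
    refine eq_of_mul_eval_eq (hh.mul (Q / D).continuous) (R / D).continuous hD fun t => ?_
    have h := heq t
    rw [← hQD, ← hRD, eval_mul, eval_mul] at h
    simp only [Pi.mul_apply]
    linear_combination h
  have hroots : ∀ t, ¬ (Q / D).IsRoot t := by
    intro t ht
    obtain ⟨u, v, huv⟩ := hcop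
    have hR : (R / D).eval t = 0 := by
      rw [← congrFun hreduced t, Pi.mul_apply, ht.eq_zero, mul_zero]
    simpa [ht.eq_zero, hR] using congrArg (eval t) huv
  have hunit : IsUnit (Q / D) := by
    refine isUnit_iff_degree_eq_zero.mpr (le_antisymm ?_ (zero_le_degree_iff.mpr ?_))
    · exact not_lt.mp fun hpos => (Complex.exists_root hpos).elim hroots
    · rintro h0; exact hQ (by rw [← hQD, h0, mul_zero])
  rw [← hQD, hunit.mul_right_dvd]
  exact gcd_dvd_left R Q

theorem exists_eq_eval_of_continuous_mul_eval_eq {h : ℂ → ℂ} (hh : Continuous h) {Q R : ℂ[X]}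
    (hQ : Q ≠ 0) (heq : ∀ t, h t * Q.eval t = R.eval t) : ∃ S : ℂ[X], h = fun t => S.eval t := by
  obtain ⟨S, rfl⟩ := dvd_of_continuous_mul_eval_eq hh hQ heq
  exact ⟨S, eq_of_mul_eval_eq hh S.continuous hQ fun t => by rw [heq, eval_mul, mul_comm]⟩

end Polynomial

theorem eq_of_cexp_eq_const {f : ℂ → ℂ} (hf : Differentiable ℂ f) {c : ℂ}
    (hc : ∀ t, exp (f t) = c) (t : ℂ) : f t = f 0 := by
  refine is_const_of_deriv_eq_zero hf (fun s => ?_) t 0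
  have hderiv := ((hf s).hasDerivAt.cexp).deriv
  rw [show (fun s => exp (f s)) = fun _ => c from funext hc, deriv_const] at hderiv
  exact (mul_eq_zero.mp hderiv.symm).resolve_left (exp_ne_zero _)

theorem eq_of_cexp_mul_eval_eq {f : ℂ → ℂ} (hf : Differentiable ℂ f) {q₁ q₂ : ℂ[X]}
    (hq₁ : q₁ ≠ 0) (heq : ∀ t, exp (f t) * q₁.eval t = q₂.eval t) (t : ℂ) : f t = f 0 := by
  obtain ⟨S, hS⟩ :=
    exists_eq_eval_of_continuous_mul_eval_eq (continuous_exp.comp hf.continuous) hq₁ heq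
  have hdeg : S.degree ≤ 0 := not_lt.mp fun hpos => by
    obtain ⟨t, ht⟩ := Complex.exists_root hpos
    exact exp_ne_zero (f t) ((congrFun hS t).trans ht)
  refine eq_of_cexp_eq_const hf (c := S.coeff 0) (fun s => ?_) t
  rw [← eval_C (a := S.coeff 0) (x := s), ← eq_C_of_degree_le_zero hdeg]
  exact congrFun hS s

namespace MvPolynomial

theorem exists_eval_eq_eval_line {σ R : Type*} [CommRing R] (P : MvPolynomial σ R)
    (a b : σ → R) : ∃ q : R[X], ∀ t, q.eval t = eval (a + t • b) P := by
  refine ⟨aeval (fun i => Polynomial.C (a i) + Polynomial.C (b i) * Polynomial.X) P, fun t => ?_⟩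
  induction P using MvPolynomial.induction_on with
  | C r => simp
  | add p q hp hq => simp [hp, hq]
  | mul_X p i hp =>
    simp only [map_mul, aeval_X, Polynomial.eval_mul, hp, Polynomial.eval_add, Polynomial.eval_C,
      Polynomial.eval_X, eval_X, Pi.add_apply, Pi.smul_apply, smul_eq_mul]
    ring

theorem differentiable_eval {σ : Type*} [Fintype σ] (P : MvPolynomial σ ℂ) :
    Differentiable ℂ fun z => eval z P :=
  differentiableOn_univ.mp (AnalyticOnNhd.eval_mvPolynomial P).differentiableOn

end MvPolynomial

theorem eq_of_cexp_mul_mvPolynomial_eval_eq {σ : Type*} [Fintype σ] {g : (σ → ℂ) → ℂ}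
    (hg : Differentiable ℂ g) {P₁ P₂ : MvPolynomial σ ℂ} {a : σ → ℂ}
    (ha : MvPolynomial.eval a P₁ ≠ 0)
    (heq : ∀ z, exp (g z) * MvPolynomial.eval z P₁ = MvPolynomial.eval z P₂) (z : σ → ℂ) :
    g z = g a := by
  set line : ℂ → σ → ℂ := fun t => a + t • (z - a)
  obtain ⟨q₁, hq₁⟩ := P₁.exists_eval_eq_eval_line a (z - a)
  obtain ⟨q₂, hq₂⟩ := P₂.exists_eval_eq_eval_line a (z - a)
  have hq₁ne : q₁ ≠ 0 := fun h0 => ha (by simpa [h0] using (hq₁ 0).symm)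
  have hline : Differentiable ℂ line := by fun_prop
  have h := eq_of_cexp_mul_eval_eq (hg.comp hline) hq₁ne (q₂ := q₂)
    (fun t => by rw [hq₁, hq₂]; exact heq (line t)) 1
  simpa [line] using h

theorem stmt19_general (n : ℕ) (hn : 1 ≤ n)
    (p ψ₁ ψ₂ : (Fin 2 → ℂ) → ℂ)
    (hp : ∃ P : MvPolynomial (Fin 2) ℂ, ∀ z, p z = MvPolynomial.eval z P)
    (hψ₁ : ∃ P : MvPolynomial (Fin 2) ℂ, ∀ z, ψ₁ z = MvPolynomial.eval z P)
    (hψ₂ : ∃ P : MvPolynomial (Fin 2) ℂ, ∀ z, ψ₂ z = MvPolynomial.eval z P)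
    (hψ₁ne : ¬ ∀ z, ψ₁ z = 0)
    (φ : (Fin 2 → ℂ) → ℂ) (hφ : Differentiable ℂ φ)
    (heq : ∀ z, Complex.exp ((n : ℂ) * φ z) * ψ₁ z = Complex.exp (p z) * ψ₂ z) :
    (∃ c : ℂ, ∀ z, (n : ℂ) * φ z - p z = c) ∧
    (∃ Q : MvPolynomial (Fin 2) ℂ, ∀ z, φ z = MvPolynomial.eval z Q) := by
  obtain ⟨P, hP⟩ := hp
  obtain ⟨P₁, hP₁⟩ := hψ₁
  obtain ⟨P₂, hP₂⟩ := hψ₂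
  obtain ⟨a, ha⟩ := not_forall.mp hψ₁ne
  have hp_diff : Differentiable ℂ p := by
    simpa only [← funext hP] using P.differentiable_eval
  have hconst : ∀ z, (n : ℂ) * φ z - p z = (n : ℂ) * φ a - p a := by
    refine eq_of_cexp_mul_mvPolynomial_eval_eq (g := fun z => (n : ℂ) * φ z - p z) (P₂ := P₂)
      ((hφ.const_mul _).sub hp_diff) (by rwa [← hP₁]) fun z => ?_
    rw [exp_sub, ← hP₁, ← hP₂, div_mul_eq_mul_div, heq, mul_div_cancel_left₀ _ (exp_ne_zero _)]
  refine ⟨⟨_, hconst⟩,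
    MvPolynomial.C ((n : ℂ)⁻¹) * (P + MvPolynomial.C ((n : ℂ) * φ a - p a)), fun z => ?_⟩
  have hn0 : (n : ℂ) ≠ 0 := Nat.cast_ne_zero.mpr (by omega)
  simp only [MvPolynomial.eval_mul, MvPolynomial.eval_C, MvPolynomial.eval_add, ← hP]
  field_simp
  linear_combination hconst z

theorem stmt19 (n : ℕ) (hn : 1 ≤ n)
    (p ψ₁ ψ₂ : (Fin 2 → ℂ) → ℂ)
    (hp : ∃ P : MvPolynomial (Fin 2) ℂ, ∀ z, p z = MvPolynomial.eval z P)
    (hψ₁ : ∃ P : MvPolynomial (Fin 2) ℂ, ∀ z, ψ₁ z = MvPolynomial.eval z P)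
    (hψ₂ : ∃ P : MvPolynomial (Fin 2) ℂ, ∀ z, ψ₂ z = MvPolynomial.eval z P)
    (hψ₁ne : ¬ ∀ z, ψ₁ z = 0)
    (φ : (Fin 2 → ℂ) → ℂ) (hφ : Differentiable ℂ φ)
    (hφnc : ¬ ∃ c : ℂ, ∀ z, φ z = c)
    (heq : ∀ z, Complex.exp ((n : ℂ) * φ z) * ψ₁ z = Complex.exp (p z) * ψ₂ z) :
    (∃ c : ℂ, ∀ z, (n : ℂ) * φ z - p z = c) ∧
    (∃ Q : MvPolynomial (Fin 2) ℂ, ∀ z, φ z = MvPolynomial.eval z Q) :=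
  stmt19_general n hn p ψ₁ ψ₂ hp hψ₁ hψ₂ hψ₁ne φ hφ heq
end
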